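/- Let r > 0 and a0 ≥ 0 be real numbers with 2a0 + 2r < 1. Then h is injective on the closed exterior of the unit disk: if w1, w2 ∈ ℂ satisfy |w1| ≥ 1, |w2| ≥ 1 and h(w1) = h(w2), then w1 = w2. -/

import Mathlib

/-!
Factoring `h(w₁) - h(w₂) = r (w₁ - w₂) (1 - ε)` with
`ε = 2 a0 / (w₁ w₂) + r (w₁ + w₂) / (w₁ w₂)²`, the bounds `|w₁|, |w₂| ≥ 1` give
`|ε| ≤ 2 a0 + 2 r < 1`, so the last factor cannot vanish.
-/

noncomputable section

/-- The rational function `h(w) = r w + a0 + 2 a0 r / w + r² / w²`, as a function of a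
complex variable (with real parameters `r`, `a0`). -/
def h (r a0 : ℝ) (w : ℂ) : ℂ :=
  (r:ℂ)*w + (a0:ℂ) + 2*(a0:ℂ)*(r:ℂ)/w + (r:ℂ)^2/w^2

section NormBounds

variable {𝕜 : Type*} [NormedField 𝕜] {w₁ w₂ : 𝕜}

lemma norm_inv_le_one_of_one_le_norm {w : 𝕜} (hw : 1 ≤ ‖w‖) : ‖w⁻¹‖ ≤ 1 := by
  rw [norm_inv]
  exact inv_le_one_of_one_le₀ hw

lemma norm_inv_mul_le_one (hw₁ : 1 ≤ ‖w₁‖) (hw₂ : 1 ≤ ‖w₂‖) : ‖(w₁ * w₂)⁻¹‖ ≤ 1 :=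
  norm_inv_le_one_of_one_le_norm (by rw [norm_mul]; nlinarith)

lemma norm_add_div_mul_sq_le_two (hw₁ : 1 ≤ ‖w₁‖) (hw₂ : 1 ≤ ‖w₂‖) :
    ‖(w₁ + w₂) / (w₁ * w₂) ^ 2‖ ≤ 2 := by
  have h₁ : w₁ ≠ 0 := norm_pos_iff.mp (by linarith)
  have h₂ : w₂ ≠ 0 := norm_pos_iff.mp (by linarith)
  have hsplit : (w₁ + w₂) / (w₁ * w₂) ^ 2 = (w₁ * w₂)⁻¹ * (w₂⁻¹ + w₁⁻¹) := by
    field_simp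
  calc ‖(w₁ + w₂) / (w₁ * w₂) ^ 2‖
      ≤ ‖(w₁ * w₂)⁻¹‖ * (‖w₂⁻¹‖ + ‖w₁⁻¹‖) := by
        rw [hsplit, norm_mul]
        gcongr
        exact norm_add_le _ _
    _ ≤ 1 * (1 + 1) := by
        gcongr
        · exact norm_inv_mul_le_one hw₁ hw₂
        · exact norm_inv_le_one_of_one_le_norm hw₂
        · exact norm_inv_le_one_of_one_le_norm hw₁
    _ = 2 := by norm_num

end NormBounds

lemma h_sub_h {r a0 : ℝ} {w₁ w₂ : ℂ} (hw₁ : w₁ ≠ 0) (hw₂ : w₂ ≠ 0) :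
    h r a0 w₁ - h r a0 w₂ =
      r * (w₁ - w₂) * (1 - (2 * a0 * (w₁ * w₂)⁻¹ + r * ((w₁ + w₂) / (w₁ * w₂) ^ 2))) := by
  simp only [h]
  field_simp
  ring

lemma norm_h_sub_h_perturbation_lt_one {r a0 : ℝ} (hr : 0 ≤ r) (ha : 0 ≤ a0)
    (hsum : 2 * a0 + 2 * r < 1) {w₁ w₂ : ℂ} (hw₁ : 1 ≤ ‖w₁‖) (hw₂ : 1 ≤ ‖w₂‖) :
    ‖2 * (a0 : ℂ) * (w₁ * w₂)⁻¹ + r * ((w₁ + w₂) / (w₁ * w₂) ^ 2)‖ < 1 := by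
  calc _ ≤ 2 * a0 * ‖(w₁ * w₂)⁻¹‖ + r * ‖(w₁ + w₂) / (w₁ * w₂) ^ 2‖ := by
        refine (norm_add_le _ _).trans_eq ?_
        simp only [norm_mul, Complex.norm_ofNat, Complex.norm_real, Real.norm_eq_abs,
          abs_of_nonneg ha, abs_of_nonneg hr]
    _ ≤ 2 * a0 * 1 + r * 2 := by
        gcongr
        · exact norm_inv_mul_le_one hw₁ hw₂
        · exact norm_add_div_mul_sq_le_two hw₁ hw₂
    _ < 1 := by linarith

/-- If `r > 0`, `a0 ≥ 0` and `2a0 + 2r < 1`, then `h` is injective on the closed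
exterior `{|w| ≥ 1}` of the unit disk. -/
theorem h_injective_outside_unit_disk (r a0 : ℝ) (hr : 0 < r) (ha : 0 ≤ a0)
    (hsum : 2*a0 + 2*r < 1) (w1 w2 : ℂ)
    (hw1 : 1 ≤ ‖w1‖) (hw2 : 1 ≤ ‖w2‖)
    (heq : h r a0 w1 = h r a0 w2) :
    w1 = w2 := by
  have hw1_ne : w1 ≠ 0 := norm_pos_iff.mp (by linarith)
  have hw2_ne : w2 ≠ 0 := norm_pos_iff.mp (by linarith)
  have hsmall := norm_h_sub_h_perturbation_lt_one hr.le ha hsum hw1 hw2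
  have hprod := h_sub_h (r := r) (a0 := a0) hw1_ne hw2_ne
  rw [heq, sub_self, eq_comm] at hprod
  rcases mul_eq_zero.mp hprod with hzero | hone
  · rcases mul_eq_zero.mp hzero with hr0 | hdiff
    · exact absurd (Complex.ofReal_eq_zero.mp hr0) hr.ne'
    · exact sub_eq_zero.mp hdiff
  · rw [sub_eq_zero] at hone
    rw [← hone, norm_one] at hsmall
    exact absurd hsmall (lt_irrefl 1)
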